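/- arXiv:math/0312353 — 4 statements merged into one kernel-verified Lean document; each statement's English description precedes it below -/
import Mathlib

section
/- Let γ : [0,1] → ℂ be a closed piecewise continuously differentiable curve and let g be a complex polynomial. Then for every t ∈ ℂ not lying on the image of γ, (1/(2πi)) ∫₀¹ g(γ(s)) γ'(s)/(γ(s) − t) ds = μ(γ,t) · g(t), where μ(γ,t) = (1/(2πi)) ∫₀¹ γ'(s)/(γ(s) − t) ds is the winding number of γ around t. -/
open MeasureTheory Set

/-- A curve `γ : ℝ → ℂ` (considered on `[0,1]`) is piecewise continuously differentiable
with (piecewise) derivative `γ'`. -/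
def PiecewiseC1 (γ γ' : ℝ → ℂ) : Prop :=
  ContinuousOn γ (Set.Icc 0 1) ∧
  IntervalIntegrable γ' MeasureTheory.volume 0 1 ∧
  ∃ S : Finset ℝ,
    (∀ s ∈ Set.Icc (0:ℝ) 1 \ S, HasDerivWithinAt γ (γ' s) (Set.Icc 0 1) s) ∧
    ContinuousOn γ' (Set.Icc (0:ℝ) 1 \ S)

/-- The winding number of a closed curve `γ` around a point `w` not on its image. -/
noncomputable def windingNumber (γ γ' : ℝ → ℂ) (w : ℂ) : ℂ :=
  (1 / (2 * Real.pi * Complex.I)) * ∫ s in (0:ℝ)..1, γ' s / (γ s - w)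

/-- The Cauchy type integral `I(γ,g,t)`. -/
noncomputable def cauchyTypeIntegral (γ γ' : ℝ → ℂ) (g : ℂ → ℂ) (t : ℂ) : ℂ :=
  (1 / (2 * Real.pi * Complex.I)) * ∫ s in (0:ℝ)..1, g (γ s) * γ' s / (γ s - t)

/-! Divide: `g = g(t) + (X - t) q` for a polynomial `q`, so on the curve
`g(γ) γ' / (γ - t) = g(t) γ' / (γ - t) + q(γ) γ'`. The first term integrates to `g(t)` times the
winding integral; the second to zero, because `q` has a polynomial antiderivative `Q` and
`∫ q(γ) γ' = Q(γ 1) - Q(γ 0)` vanishes on a closed curve. -/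

theorem Polynomial.exists_derivative_eq {K : Type*} [Field K] [CharZero K] (q : Polynomial K) :
    ∃ Q : Polynomial K, Q.derivative = q := by
  induction q using Polynomial.induction_on' with
  | add p r hp hr =>
    obtain ⟨P, hP⟩ := hp
    obtain ⟨R, hR⟩ := hr
    exact ⟨P + R, by rw [Polynomial.derivative_add, hP, hR]⟩
  | monomial n a =>
    refine ⟨Polynomial.monomial (n + 1) (a / (n + 1)), ?_⟩
    rw [Polynomial.derivative_monomial, Nat.add_sub_cancel, Nat.cast_add_one,
      div_mul_cancel₀ _ (Nat.cast_add_one_ne_zero n)]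

namespace PiecewiseC1

variable {γ γ' : ℝ → ℂ}

theorem intervalIntegrable_comp_mul (hγ : PiecewiseC1 γ γ') {f : ℂ → ℂ}
    (hf : ContinuousOn f (γ '' Icc 0 1)) :
    IntervalIntegrable (fun s => f (γ s) * γ' s) volume 0 1 := by
  refine hγ.2.1.continuousOn_mul ?_
  rw [uIcc_of_le zero_le_one]
  exact hf.comp hγ.1 (mapsTo_image γ _)

theorem integral_comp_mul_deriv (hγ : PiecewiseC1 γ γ') {F f : ℂ → ℂ}
    (hF : ∀ z ∈ γ '' Icc 0 1, HasDerivAt F (f z) z) (hf : ContinuousOn f (γ '' Icc 0 1)) :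
    ∫ s in (0:ℝ)..1, f (γ s) * γ' s = F (γ 1) - F (γ 0) := by
  obtain ⟨S, hderiv, -⟩ := hγ.2.2
  have hFγ : ContinuousOn (fun s => F (γ s)) (Icc 0 1) := fun s hs =>
    (hF (γ s) (mem_image_of_mem γ hs)).continuousAt.comp_continuousWithinAt (hγ.1 s hs)
  refine integral_eq_of_hasDerivAt_off_countable_of_le _ _ zero_le_one
    S.finite_toSet.countable hFγ (fun s hs => ?_) (hγ.intervalIntegrable_comp_mul hf)
  have hγs : HasDerivAt γ (γ' s) s :=
    (hderiv s ⟨Ioo_subset_Icc_self hs.1, hs.2⟩).hasDerivAt (Icc_mem_nhds hs.1.1 hs.1.2)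
  exact (hF (γ s) (mem_image_of_mem γ (Ioo_subset_Icc_self hs.1))).comp s hγs

theorem integral_polynomial_eval_mul_eq_zero (hγ : PiecewiseC1 γ γ') (hclosed : γ 0 = γ 1)
    (q : Polynomial ℂ) : ∫ s in (0:ℝ)..1, q.eval (γ s) * γ' s = 0 := by
  obtain ⟨Q, hQ⟩ := q.exists_derivative_eq
  rw [hγ.integral_comp_mul_deriv (F := Q.eval) (fun z _ => hQ ▸ Q.hasDerivAt z)
    q.continuous.continuousOn, hclosed, sub_self]

end PiecewiseC1

theorem stmt0 (γ γ' : ℝ → ℂ) (hγ : PiecewiseC1 γ γ') (hclosed : γ 0 = γ 1)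
    (g : Polynomial ℂ) (t : ℂ) (ht : t ∉ γ '' Set.Icc 0 1) :
    cauchyTypeIntegral γ γ' (fun z => g.eval z) t = windingNumber γ γ' t * g.eval t := by
  obtain ⟨q, hq⟩ := Polynomial.X_sub_C_dvd_sub_C_eval (a := t) (p := g)
  have hg : ∀ z, g.eval z = g.eval t + (z - t) * q.eval z := fun z => by
    have := congrArg (Polynomial.eval z) hq
    simp only [Polynomial.eval_sub, Polynomial.eval_mul, Polynomial.eval_X,
      Polynomial.eval_C] at this
    linear_combination this
  have hwind : IntervalIntegrable (fun s => (γ s - t)⁻¹ * γ' s) volume 0 1 :=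
    hγ.intervalIntegrable_comp_mul (f := fun z => (z - t)⁻¹)
      ((continuousOn_id.sub continuousOn_const).inv₀ fun z hz =>
        sub_ne_zero.mpr (ne_of_mem_of_not_mem hz ht))
  have hintegrand : EqOn (fun s => g.eval (γ s) * γ' s / (γ s - t))
      (fun s => g.eval t * ((γ s - t)⁻¹ * γ' s) + q.eval (γ s) * γ' s) (uIcc 0 1) := by
    intro s hs
    rw [uIcc_of_le zero_le_one] at hs
    have hγt : γ s - t ≠ 0 := sub_ne_zero.mpr fun h => ht ⟨s, hs, h⟩
    simp only [hg (γ s)]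
    field_simp
  simp only [cauchyTypeIntegral, windingNumber]
  rw [intervalIntegral.integral_congr hintegrand, intervalIntegral.integral_add
    (hwind.const_mul _) (hγ.intervalIntegrable_comp_mul q.continuous.continuousOn),
    hγ.integral_polynomial_eval_mul_eq_zero hclosed, intervalIntegral.integral_const_mul]
  simp only [div_eq_inv_mul, add_zero]
  ring
end

section
/- Let T_n denote the n-th Chebyshev polynomial of the first kind, and set a = −√3/2, b = √3/2, P = T₆ and Q = T₂ + T₃. Then: (i) for every integer k ≥ 0 the one-sided moment vanishes, ∫_a^b T₆(x)^k (T₂(x) + T₃(x)) T₆'(x) dx = 0; and yet (ii) there exist no complex polynomials P̃, Q̃, W with deg W ≥ 2 such that T₆ = P̃ ∘ W and T₂ + T₃ = Q̃ ∘ W. In particular all the moments m_k(P,Q) vanish although the polynomial composition condition fails for (T₆, T₂ + T₃, a, b). -/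
/-!
Part (i): the moments are linear in `Q`, and a moment vanishes as soon as `P` and `Q` factor
through a common `W` with `W(a) = W(b)` (substitute `u = W(x)`). Splitting `Q = T₂ + T₃`, the
`T₂`-term factors through `W = T₂` (even, so `T₂(a) = T₂(b)`) via `T₆ = T₃ ∘ T₂`, and the `T₃`-term
factors through `W = T₃` (which vanishes at `±√3/2`) via `T₆ = T₂ ∘ T₃`.

Part (ii): since `deg (T₂ + T₃) = 3` is prime and `deg W ≥ 2`, the outer factor of `T₂ + T₃` is
affine, so `T₆` would be a quadratic polynomial `c S² + c' S + c''` in `S = 4x³ + 2x² - 3x - 1`.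
Both its `x⁶`- and `x⁵`-coefficients equal `16c`, whereas `T₆` has `32` and, being even, `0`.
-/

open Polynomial Polynomial.Chebyshev intervalIntegral

noncomputable def oneSidedMoment (P Q : ℝ[X]) (a b : ℝ) (k : ℕ) : ℝ :=
  ∫ x in a..b, P.eval x ^ k * Q.eval x * P.derivative.eval x

theorem oneSidedMoment_add_right (P Q₁ Q₂ : ℝ[X]) (a b : ℝ) (k : ℕ) :
    oneSidedMoment P (Q₁ + Q₂) a b k = oneSidedMoment P Q₁ a b k + oneSidedMoment P Q₂ a b k := by
  simp only [oneSidedMoment, eval_add, mul_add, add_mul]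
  exact integral_add (Continuous.intervalIntegrable (by fun_prop) _ _)
    (Continuous.intervalIntegrable (by fun_prop) _ _)

theorem oneSidedMoment_eq_zero_of_comp {P Q p q w : ℝ[X]} {a b : ℝ} (hP : P = p.comp w)
    (hQ : Q = q.comp w) (hw : w.eval a = w.eval b) (k : ℕ) : oneSidedMoment P Q a b k = 0 := by
  subst hP hQ
  let g : ℝ → ℝ := fun u ↦ p.eval u ^ k * q.eval u * p.derivative.eval u
  have hsubst : ∫ x in a..b, (g ∘ w.eval) x * w.derivative.eval x =
      ∫ u in w.eval a..w.eval b, g u :=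
    integral_comp_mul_deriv (fun x _ ↦ w.hasDerivAt x) w.derivative.continuousOn (by fun_prop)
  rw [hw, integral_same] at hsubst
  rw [← hsubst, oneSidedMoment]
  congr 1
  ext x
  simp only [derivative_comp, eval_comp, eval_mul, Function.comp, g]
  ring

theorem T_three (R : Type*) [CommRing R] : T R 3 = 4 * X ^ 3 - 3 * X := by
  rw [show (3 : ℤ) = 1 + 2 by norm_num, T_add_two, one_add_one_eq_two, T_two, T_one]
  ring

theorem natDegree_eq_one_of_comp_of_prime {R : Type*} [Semiring R] [NoZeroDivisors R]
    {p w : R[X]} (hprime : (p.comp w).natDegree.Prime) (hw : 2 ≤ w.natDegree) :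
    p.natDegree = 1 := by
  rw [natDegree_comp] at hprime
  rcases Nat.prime_mul_iff.mp hprime with ⟨_, h⟩ | ⟨_, h⟩
  · omega
  · exact h

theorem exists_comp_eq_of_natDegree_eq_one {K : Type*} [Field K] {q : K[X]}
    (hq : q.natDegree = 1) (p w : K[X]) :
    ∃ r : K[X], r.natDegree = p.natDegree ∧ p.comp w = r.comp (q.comp w) := by
  have hq1 : q.coeff 1 ≠ 0 := by
    rw [← hq]
    exact leadingCoeff_ne_zero.mpr (by rintro rfl; simp at hq)
  have hinv : (C (q.coeff 1)⁻¹ * (X - C (q.coeff 0))).comp q = X := by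
    nth_rw 3 [eq_X_add_C_of_natDegree_le_one hq.le]
    rw [mul_comp, sub_comp, C_comp, X_comp, C_comp, add_sub_cancel_right, ← mul_assoc,
      ← Polynomial.C_mul, inv_mul_cancel₀ hq1, C_1, one_mul]
  refine ⟨p.comp (C (q.coeff 1)⁻¹ * (X - C (q.coeff 0))), ?_, ?_⟩
  · rw [natDegree_comp, natDegree_C_mul (inv_ne_zero hq1), natDegree_X_sub_C, mul_one]
  · rw [comp_assoc, ← comp_assoc _ q, hinv, X_comp]

theorem T_six_ne_comp_T_two_add_T_three {R : Type*} [CommRing R] [IsDomain R] [NeZero (2 : R)]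
    {r : R[X]} (hr : r.natDegree ≤ 2) : T R 6 ≠ r.comp (T R 2 + T R 3) := by
  have hT6 : T R 6 = (T R 2).comp (T R 3) := by simpa using T_mul R 2 3
  rw [r.as_sum_range_C_mul_X_pow' (n := 3) (by omega), hT6, T_two, T_three]
  simp only [Finset.sum_range_succ, Finset.sum_range_zero, zero_add, add_comp, sub_comp, mul_comp,
    pow_comp, C_comp, X_comp, one_comp, ofNat_comp, pow_zero, pow_one, mul_one]
  intro h
  have hcoeff5 : r.coeff 2 * 16 = 0 := by
    have := congrArg (coeff · 5) h
    ring_nf at this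
    simpa [coeff_X, coeff_one, coeff_C] using this.symm
  have hcoeff6 : r.coeff 2 * 16 = 32 := by
    have := congrArg (coeff · 6) h
    ring_nf at this
    simpa [coeff_X, coeff_one, coeff_C] using this.symm
  exact pow_ne_zero 5 (two_ne_zero (α := R)) (by linear_combination hcoeff5 - hcoeff6)

theorem T_real_three_eval_neg_sqrt_three_div_two :
    (T ℝ 3).eval (-(Real.sqrt 3 / 2)) = (T ℝ 3).eval (Real.sqrt 3 / 2) := by
  have hs : Real.sqrt 3 ^ 2 = 3 := Real.sq_sqrt (by norm_num)
  simp only [T_three, eval_sub, eval_mul, eval_pow, eval_X, eval_ofNat]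
  linear_combination (-Real.sqrt 3) * hs

theorem stmt8 :
    (∀ k : ℕ, ∫ x in (-(Real.sqrt 3 / 2))..(Real.sqrt 3 / 2),
        ((T ℝ 6).eval x) ^ k * ((T ℝ 2 + T ℝ 3).eval x) * ((T ℝ 6).derivative.eval x)
          = (0:ℝ)) ∧
    ¬ ∃ (Pt Qt W : Polynomial ℂ), 2 ≤ W.natDegree ∧
        T ℂ 6 = Pt.comp W ∧ T ℂ 2 + T ℂ 3 = Qt.comp W := by
  constructor
  · intro k
    have hT2 : (T ℝ 2).eval (-(Real.sqrt 3 / 2)) = (T ℝ 2).eval (Real.sqrt 3 / 2) := by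
      simp [T_eval_neg]
    change oneSidedMoment (T ℝ 6) (T ℝ 2 + T ℝ 3) _ _ k = 0
    rw [oneSidedMoment_add_right,
      oneSidedMoment_eq_zero_of_comp (by simpa using T_mul ℝ 3 2) X_comp.symm hT2,
      oneSidedMoment_eq_zero_of_comp (by simpa using T_mul ℝ 2 3) X_comp.symm
        T_real_three_eval_neg_sqrt_three_div_two, add_zero]
  · rintro ⟨Pt, Qt, W, hW, hP, hQ⟩
    have hS : (T ℂ 2 + T ℂ 3).natDegree = 3 := by
      rw [natDegree_add_eq_right_of_natDegree_lt] <;> simp [natDegree_T]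
    have hQt : Qt.natDegree = 1 :=
      natDegree_eq_one_of_comp_of_prime (hQ ▸ hS ▸ Nat.prime_three) hW
    have hWdeg : W.natDegree = 3 := by rw [← hS, hQ, natDegree_comp, hQt, one_mul]
    have hPt : Pt.natDegree = 2 := by
      have h6 : (T ℂ 6).natDegree = 6 := by simp [natDegree_T]
      rw [hP, natDegree_comp, hWdeg] at h6
      omega
    obtain ⟨r, hr, hPr⟩ := exists_comp_eq_of_natDegree_eq_one hQt Pt W
    exact T_six_ne_comp_T_two_add_T_three (hr.trans hPt).le (by rw [hQ, ← hPr, hP])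
end

section
/- Let a < b be real numbers and let P be a polynomial with real coefficients such that P(a) = P(b) = 0 and P(x) > 0 for all x ∈ (a,b). Then P possesses Property (E) with respect to a and b: there exists a piecewise continuously differentiable path Γ : [0,1] → ℂ with Γ(0) = a and Γ(1) = b such that P(Γ(s)) = 0 only for s = 0 and s = 1, and 0 lies in the closure of the unbounded connected component of ℂ \ (P∘Γ)([0,1]). -/
open MeasureTheory Set Polynomial

/-- Property (E) for a complex polynomial `P` with `P(a) = P(b) = 0`: there is a
piecewise `C¹` path `Γ` from `a` to `b` such that `0` is a simple point of the closed
curve `γ = P ∘ Γ` and `0` lies on the boundary of the unbounded (exterior) component of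
the complement of the image of `γ`. -/
def PropertyE (P : Polynomial ℂ) (a b : ℂ) : Prop :=
  ∃ Γ Γ' : ℝ → ℂ, PiecewiseC1 Γ Γ' ∧ Γ 0 = a ∧ Γ 1 = b ∧
    (∀ s ∈ Set.Icc (0:ℝ) 1, P.eval (Γ s) = 0 → s = 0 ∨ s = 1) ∧
    ∃ t₀ ∈ ((fun s => P.eval (Γ s)) '' Set.Icc 0 1)ᶜ,
      ¬ Bornology.IsBounded
          (connectedComponentIn ((fun s => P.eval (Γ s)) '' Set.Icc 0 1)ᶜ t₀) ∧
      (0:ℂ) ∈ closure (connectedComponentIn ((fun s => P.eval (Γ s)) '' Set.Icc 0 1)ᶜ t₀)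

/-!
The straight segment from `a` to `b` is mapped by `P` into the ray `[0, ∞)` (which is `Ici 0` for
`ComplexOrder`), meeting `0` only at its endpoints. The complement of that ray, `-slitPlane`, is
connected, unbounded and has `0` on its boundary; it therefore lies in a single component of the
complement of the curve, which is then the exterior one and has `0` in its closure.
-/

open scoped ComplexOrder Pointwise Topology

namespace Complex

lemma neg_slitPlane : -slitPlane = (Ici (0 : ℂ))ᶜ := by
  rw [← Complex.compl_Iic_zero]
  simp

lemma isPreconnected_compl_Ici_zero : IsPreconnected (Ici (0 : ℂ))ᶜ := by
  rw [← neg_slitPlane]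
  exact (starConvex_one_slitPlane.neg.isPathConnected (by simp)).isConnected.isPreconnected

lemma not_isBounded_compl_Ici_zero : ¬ Bornology.IsBounded (Ici (0 : ℂ))ᶜ := by
  intro h
  obtain ⟨R, hR⟩ := h.exists_norm_le
  have hmem : ((-(|R| + 1) : ℝ) : ℂ) ∈ (Ici (0 : ℂ))ᶜ := by
    rw [mem_compl_iff, mem_Ici, zero_le_real]
    linarith [abs_nonneg R]
  have hle := hR _ hmem
  rw [norm_real, Real.norm_eq_abs] at hle
  linarith [neg_le_abs (-(|R| + 1)), le_abs_self R]

lemma zero_mem_closure_compl_Ici_zero : (0 : ℂ) ∈ closure (Ici (0 : ℂ))ᶜ := by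
  refine mem_closure_of_tendsto (f := fun x : ℝ => (x : ℂ)) (b := 𝓝[<] 0) ?_ ?_
  · simpa using (continuous_ofReal.tendsto 0).mono_left nhdsWithin_le_nhds
  · filter_upwards [self_mem_nhdsWithin] with x hx
    simpa using hx

lemma exists_unbounded_connectedComponentIn_compl_zero_mem_closure {K : Set ℂ} (hK : K ⊆ Ici 0) :
    ∃ t₀ ∈ Kᶜ, ¬ Bornology.IsBounded (connectedComponentIn Kᶜ t₀) ∧
      (0 : ℂ) ∈ closure (connectedComponentIn Kᶜ t₀) := by
  have hsub : (Ici (0 : ℂ))ᶜ ⊆ Kᶜ := compl_subset_compl.2 hK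
  have hmem : (-1 : ℂ) ∈ (Ici (0 : ℂ))ᶜ := by simp [← neg_slitPlane]
  have hcomp := isPreconnected_compl_Ici_zero.subset_connectedComponentIn hmem hsub
  exact ⟨-1, hsub hmem, fun h => not_isBounded_compl_Ici_zero (h.subset hcomp),
    closure_mono hcomp zero_mem_closure_compl_Ici_zero⟩

end Complex

lemma piecewiseC1_deriv_of_contDiff {γ : ℝ → ℂ} (hγ : ContDiff ℝ 1 γ) :
    PiecewiseC1 γ (deriv γ) :=
  ⟨hγ.continuous.continuousOn, (hγ.continuous_deriv le_rfl).intervalIntegrable 0 1, ∅,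
    fun s _ => (hγ.differentiable one_ne_zero s).hasDerivAt.hasDerivWithinAt,
    (hγ.continuous_deriv le_rfl).continuousOn⟩

lemma propertyE_of_eval_nonneg {P : ℂ[X]} {a b : ℂ} {Γ : ℝ → ℂ} (hΓ : ContDiff ℝ 1 Γ)
    (h0 : Γ 0 = a) (h1 : Γ 1 = b)
    (hsimple : ∀ s ∈ Icc (0 : ℝ) 1, P.eval (Γ s) = 0 → s = 0 ∨ s = 1)
    (hnonneg : ∀ s ∈ Icc (0 : ℝ) 1, 0 ≤ P.eval (Γ s)) :
    PropertyE P a b :=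
  ⟨Γ, deriv Γ, piecewiseC1_deriv_of_contDiff hΓ, h0, h1, hsimple,
    Complex.exists_unbounded_connectedComponentIn_compl_zero_mem_closure <| by
      rintro _ ⟨s, hs, rfl⟩
      exact hnonneg s hs⟩

theorem stmt14 (a b : ℝ) (hab : a < b) (P : Polynomial ℝ)
    (hPa : P.eval a = 0) (hPb : P.eval b = 0)
    (hpos : ∀ x : ℝ, a < x → x < b → 0 < P.eval x) :
    PropertyE (P.map (algebraMap ℝ ℂ)) (a : ℂ) (b : ℂ) := by
  have heval (x : ℝ) : (P.map (algebraMap ℝ ℂ)).eval (x : ℂ) = ((P.eval x : ℝ) : ℂ) := by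
    rw [eval_map_algebraMap, ← Complex.coe_algebraMap, aeval_algebraMap_apply_eq_algebraMap_eval]
  have hsegment (s : ℝ) (hs : s ∈ Icc (0 : ℝ) 1) :
      s = 0 ∨ s = 1 ∨ 0 < P.eval (AffineMap.lineMap a b s) := by
    rcases eq_endpoints_or_mem_Ioo_of_mem_Icc hs with rfl | rfl | ⟨hs0, hs1⟩
    · exact Or.inl rfl
    · exact Or.inr (Or.inl rfl)
    · exact Or.inr <| Or.inr <| hpos _ ((left_lt_lineMap_iff_pos hab).2 hs0)
        ((lineMap_lt_right_iff_lt_one hab).2 hs1)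
  refine propertyE_of_eval_nonneg (Γ := fun s => ((AffineMap.lineMap a b s : ℝ) : ℂ))
    (Complex.ofRealCLM.contDiff.comp (AffineMap.contDiff_lineMap a b)) (by simp) (by simp)
    (fun s hs h => ?_) (fun s hs => ?_)
  · rw [heval, Complex.ofReal_eq_zero] at h
    rcases hsegment s hs with h' | h' | h'
    exacts [Or.inl h', Or.inr h', absurd h h'.ne']
  · rw [heval, Complex.zero_le_real]
    rcases hsegment s hs with rfl | rfl | h'
    exacts [by simp [hPa], by simp [hPb], h'.le]
end

section
/- Let 0 ≤ a < b be real numbers and let P(x) = (x − a)(b − x)P₁(x), where P₁(x) = Σ_{k=0}^n a_k x^k is a nonzero polynomial with complex coefficients a_k. If the convex hull in ℂ of the set of coefficients {a₀, a₁, …, a_n} does not contain 0, then P possesses Property (E) with respect to a and b: there exists a piecewise continuously differentiable path Γ : [0,1] → ℂ with Γ(0) = a and Γ(1) = b such that P(Γ(s)) = 0 only for s = 0 and s = 1, and 0 lies in the closure of the unbounded connected component of ℂ \ (P∘Γ)([0,1]). -/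
open MeasureTheory Set Polynomial

/-! Separate `0` from the coefficients by a real functional `F` with `F aₖ > 0`. Along the segment
`Γ s = a + s (b - a)` we have `P (Γ s) = s (1 - s) (b - a)² P₁ (Γ s)`, and for real `t ≥ 0`,
`F (P₁ t) = ∑ tᵏ F aₖ ≥ F a₀ > 0`. Hence `P ∘ Γ` vanishes only at the endpoints and its image lies
in the closed half-plane `F ≥ 0`; the opposite open half-plane is an unbounded connected subset of
the complement having `0` on its boundary. -/

section Separation

variable {E : Type*} [NormedAddCommGroup E] [NormedSpace ℝ E]

theorem exists_strongDual_pos_of_zero_notMem_convexHull {s : Set E} (hs : s.Finite)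
    (h0 : (0 : E) ∉ convexHull ℝ s) : ∃ F : StrongDual ℝ E, ∀ x ∈ s, 0 < F x := by
  obtain ⟨F, u, hF0, hFs⟩ := geometric_hahn_banach_point_closed (convex_convexHull ℝ s)
    ((hs.isCompact_convexHull (𝕜 := ℝ)).isClosed) h0
  rw [map_zero] at hF0
  exact ⟨F, fun x hx => hF0.trans (hFs x (subset_convexHull ℝ s hx))⟩

/-- The open half-space `{F < 0}` is a connected cone with vertex `0` inside `Kᶜ`. -/
theorem exists_unbounded_connectedComponentIn_compl_zero_mem_closure (F : StrongDual ℝ E)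
    (hF : F ≠ 0) {K : Set E} (hK : ∀ z ∈ K, 0 ≤ F z) :
    ∃ t₀ ∈ Kᶜ, ¬ Bornology.IsBounded (connectedComponentIn Kᶜ t₀) ∧
      (0 : E) ∈ closure (connectedComponentIn Kᶜ t₀) := by
  obtain ⟨v, hv⟩ : ∃ v, F v = -1 := by
    obtain ⟨w, hw⟩ : ∃ w, F w ≠ 0 := by
      by_contra! h
      exact hF (ContinuousLinearMap.ext h)
    exact ⟨(-(F w)⁻¹) • w, by simp [hw]⟩
  set U : Set E := F ⁻¹' Iio 0
  have hrayU : ∀ r : ℝ, 0 < r → r • v ∈ U := fun r hr => by simp [U, hv, hr]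
  have hUK : U ⊆ Kᶜ := fun z hz hzK => (hK z hzK).not_gt hz
  have hvU : v ∈ U := by simpa using hrayU 1 one_pos
  have hUcomp : U ⊆ connectedComponentIn Kᶜ v :=
    ((convex_Iio 0).linear_preimage F.toLinearMap).isPreconnected.subset_connectedComponentIn
      hvU hUK
  refine ⟨v, hUK hvU, fun hbdd => ?_, closure_mono hUcomp ?_⟩
  · obtain ⟨R, hR⟩ := (hbdd.subset hUcomp).exists_norm_le
    have hv0 : 0 < ‖v‖ := norm_pos_iff.2 (by rintro rfl; simp at hv)
    have := hR _ (hrayU ((|R| + 1) / ‖v‖) (by positivity))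
    rw [norm_smul, Real.norm_of_nonneg (by positivity), div_mul_cancel₀ _ hv0.ne'] at this
    linarith [le_abs_self R]
  · have hlim : Filter.Tendsto (fun r : ℝ => r • v) (nhdsWithin 0 (Ioi 0)) (nhds 0) := by
      have hcont : Continuous fun r : ℝ => r • v := by fun_prop
      exact (hcont.tendsto' 0 0 (zero_smul ℝ v)).mono_left nhdsWithin_le_nhds
    exact mem_closure_of_tendsto hlim (eventually_nhdsWithin_of_forall hrayU)

end Separation

theorem piecewiseC1_of_hasDerivAt {γ γ' : ℝ → ℂ} (hγ : ∀ s, HasDerivAt γ (γ' s) s)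
    (hγ' : Continuous γ') : PiecewiseC1 γ γ' :=
  ⟨(continuous_iff_continuousAt.2 fun s => (hγ s).continuousAt).continuousOn,
    hγ'.intervalIntegrable 0 1, ∅, fun s _ => (hγ s).hasDerivWithinAt, hγ'.continuousOn⟩

theorem LinearMap.map_sum_pow_smul_pos {E : Type*} [AddCommGroup E] [Module ℝ E]
    {n : ℕ} (F : E →ₗ[ℝ] ℝ) (v : Fin (n + 1) → E) (hv : ∀ k, 0 < F (v k)) {t : ℝ} (ht : 0 ≤ t) :
    0 < F (∑ k : Fin (n + 1), t ^ (k : ℕ) • v k) := by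
  rw [map_sum]
  refine Finset.sum_pos' (fun k _ => ?_) ⟨0, Finset.mem_univ _, by simpa using hv 0⟩
  rw [F.map_smul, smul_eq_mul]
  exact mul_nonneg (pow_nonneg ht _) (hv k).le

theorem eval_ofReal_sum_C_mul_X_pow {n : ℕ} (co : Fin (n + 1) → ℂ) (t : ℝ) :
    (∑ k : Fin (n + 1), C (co k) * X ^ (k : ℕ)).eval (t : ℂ) =
      ∑ k : Fin (n + 1), t ^ (k : ℕ) • co k := by
  simp only [eval_finsetSum, eval_mul, eval_C, eval_pow, eval_X, Complex.real_smul]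
  push_cast
  exact Finset.sum_congr rfl fun k _ => mul_comm _ _

theorem eval_X_sub_C_mul_C_sub_X_mul_ofReal_affine (a b s : ℝ) (P₁ : ℂ[X]) :
    ((X - C (a : ℂ)) * (C (b : ℂ) - X) * P₁).eval ((a + s * (b - a) : ℝ) : ℂ)
      = (s * (1 - s) * (b - a) ^ 2 : ℝ) • P₁.eval ((a + s * (b - a) : ℝ) : ℂ) := by
  simp only [eval_mul, eval_sub, eval_X, eval_C, Complex.real_smul]
  push_cast
  ring

theorem stmt15_general (a b : ℝ) (ha : 0 ≤ a) (hab : a < b)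
    (n : ℕ) (co : Fin (n + 1) → ℂ)
    (P₁ : Polynomial ℂ) (hP₁ : P₁ = ∑ k : Fin (n + 1), Polynomial.C (co k) * Polynomial.X ^ (k : ℕ))
    (hhull : (0:ℂ) ∉ convexHull ℝ (Set.range co))
    (P : Polynomial ℂ)
    (hP : P = (Polynomial.X - Polynomial.C (a : ℂ)) * (Polynomial.C (b : ℂ) - Polynomial.X) * P₁) :
    PropertyE P (a : ℂ) (b : ℂ) := by
  obtain ⟨F, hF⟩ := exists_strongDual_pos_of_zero_notMem_convexHull (finite_range co) hhull
  have hFco : ∀ k, 0 < F (co k) := fun k => hF _ (mem_range_self k)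
  set Γ : ℝ → ℂ := fun s => ((a + s * (b - a) : ℝ) : ℂ)
  have hFP : ∀ s, F (P.eval (Γ s)) = s * (1 - s) * (b - a) ^ 2 * F (P₁.eval (Γ s)) := fun s => by
    rw [hP, eval_X_sub_C_mul_C_sub_X_mul_ofReal_affine, F.map_smul, smul_eq_mul]
  have hFP₁ : ∀ s ∈ Icc (0 : ℝ) 1, 0 < F (P₁.eval (Γ s)) := fun s hs => by
    rw [hP₁, eval_ofReal_sum_C_mul_X_pow]
    exact F.toLinearMap.map_sum_pow_smul_pos co hFco
      (add_nonneg ha (mul_nonneg hs.1 (sub_nonneg.2 hab.le)))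
  have hΓ : ∀ s, HasDerivAt Γ ((b - a : ℝ) : ℂ) s := fun s =>
    ((hasDerivAt_mul_const (b - a)).const_add a).ofReal_comp
  refine ⟨Γ, fun _ => ((b - a : ℝ) : ℂ), piecewiseC1_of_hasDerivAt hΓ continuous_const,
    by simp [Γ], by simp [Γ], fun s hs hs0 => ?_, ?_⟩
  · have hvanish : s * (1 - s) * (b - a) ^ 2 = 0 := by
      have := hFP s
      rw [hs0, map_zero, eq_comm, mul_eq_zero] at this
      exact this.resolve_right (hFP₁ s hs).ne'
    simpa [sub_eq_zero, hab.ne', eq_comm (a := (1 : ℝ))] using hvanish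
  · refine exists_unbounded_connectedComponentIn_compl_zero_mem_closure F
      (fun h => by simpa [h] using hFco 0) ?_
    rintro _ ⟨s, hs, rfl⟩
    rw [hFP]
    exact mul_nonneg (mul_nonneg (mul_nonneg hs.1 (sub_nonneg.2 hs.2)) (sq_nonneg _))
      (hFP₁ s hs).le

theorem stmt15 (a b : ℝ) (ha : 0 ≤ a) (hab : a < b)
    (n : ℕ) (co : Fin (n + 1) → ℂ)
    (P₁ : Polynomial ℂ) (hP₁ : P₁ = ∑ k : Fin (n + 1), Polynomial.C (co k) * Polynomial.X ^ (k : ℕ))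
    (hP₁ne : P₁ ≠ 0)
    (hhull : (0:ℂ) ∉ convexHull ℝ (Set.range co))
    (P : Polynomial ℂ)
    (hP : P = (Polynomial.X - Polynomial.C (a : ℂ)) * (Polynomial.C (b : ℂ) - Polynomial.X) * P₁) :
    PropertyE P (a : ℂ) (b : ℂ) :=
  stmt15_general a b ha hab n co P₁ hP₁ hhull P hP
end
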